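/- In a qubit system, the POVM A = ((2/3)|0⟩⟨0|, (2/3)|φ₊⟩⟨φ₊|, (2/3)|φ₋⟩⟨φ₋|), where |φ_±⟩ = (1/2)|0⟩ ± (√3/2)|1⟩, is a valid POVM (the three operators are positive and sum to the identity) and satisfies the intersubjectivity support condition: for any two distinct elements a, a' of A, range(a) ∩ range(a') = {0}; yet A is not a PVM since (2/3)|0⟩⟨0| is not a projection. -/

import Mathlib

/-!
Each element of `A13` is `2/3` times the projection `|ψ⟩⟨ψ|` onto a unit vector `ψ`, so it is
positive semidefinite, its range lies on the line `ℂ ψ`, and it is idempotent only if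
`(2/3)² = 2/3`. The three vectors are pairwise linearly independent (their `2 × 2` determinants
are `±√3/2`), so the ranges of distinct elements meet only in `0`.
-/

open scoped ComplexOrder

/-- The rank-one operator `|ψ⟩⟨ψ|` for a vector `ψ ∈ ℂ²`. -/
noncomputable def outer (v : Fin 2 → ℂ) : Matrix (Fin 2) (Fin 2) ℂ :=
  Matrix.vecMulVec v (star v)

noncomputable def ketZero : Fin 2 → ℂ := ![1, 0]
noncomputable def ketPhiPlus : Fin 2 → ℂ := ![1 / 2, (Real.sqrt 3 : ℂ) / 2]
noncomputable def ketPhiMinus : Fin 2 → ℂ := ![1 / 2, -((Real.sqrt 3 : ℂ) / 2)]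

/-- The three-outcome qubit POVM `((2/3)|0⟩⟨0|, (2/3)|φ₊⟩⟨φ₊|, (2/3)|φ₋⟩⟨φ₋|)`. -/
noncomputable def A13 : Fin 3 → Matrix (Fin 2) (Fin 2) ℂ :=
  ![(2 / 3 : ℝ) • outer ketZero, (2 / 3 : ℝ) • outer ketPhiPlus,
    (2 / 3 : ℝ) • outer ketPhiMinus]

open Matrix

theorem isIdempotentElem_smul_iff {R A : Type*} [Ring R] [IsCancelMulZero R] [Ring A] [Module R A]
    [IsScalarTower R A A] [SMulCommClass R A A] [Module.IsTorsionFree R A] {p : A}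
    (hp : IsIdempotentElem p) (hp0 : p ≠ 0) (r : R) :
    IsIdempotentElem (r • p) ↔ IsIdempotentElem r := by
  rw [IsIdempotentElem, smul_mul_smul_comm, hp.eq]
  exact (smul_left_injective R hp0).eq_iff

theorem Matrix.isIdempotentElem_vecMulVec_self_star {n R : Type*} [Fintype n] [Semiring R]
    [Star R] {v : n → R} (hv : star v ⬝ᵥ v = 1) : IsIdempotentElem (vecMulVec v (star v)) := by
  rw [IsIdempotentElem, vecMulVec_mul_vecMulVec, hv, one_smul]

theorem Matrix.range_mulVecLin_smul_vecMulVec_le {n S R : Type*} [Fintype n] [CommSemiring R]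
    [DistribSMul S R] [IsScalarTower S R R] (r : S) (v w : n → R) :
    LinearMap.range (r • vecMulVec v w).mulVecLin ≤ R ∙ v := by
  rintro _ ⟨y, rfl⟩
  rw [Submodule.mem_span_singleton]
  refine ⟨r • (w ⬝ᵥ y), ?_⟩
  rw [mulVecLin_apply, smul_mulVec, vecMulVec_mulVec, op_smul_eq_smul, smul_assoc]

theorem linearIndependent_pair_of_det_ne_zero {K : Type*} [Field K] {v w : Fin 2 → K}
    (h : v 0 * w 1 - v 1 * w 0 ≠ 0) : LinearIndependent K ![v, w] :=
  linearIndependent_rows_of_det_ne_zero (A := of ![v, w]) (by simpa [det_fin_two] using h)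

theorem LinearIndependent.span_singleton_inf_span_singleton_eq_bot {K V : Type*} [Field K]
    [AddCommGroup V] [Module K V] {v w : V} (h : LinearIndependent K ![v, w]) :
    (K ∙ v) ⊓ (K ∙ w) = ⊥ := by
  simpa [Set.image_singleton, disjoint_iff] using
    h.disjoint_span_image (s := {0}) (t := {1}) (by simp)

noncomputable def A13Ket : Fin 3 → Fin 2 → ℂ := ![ketZero, ketPhiPlus, ketPhiMinus]

theorem A13_eq_smul_outer (i : Fin 3) : A13 i = (2 / 3 : ℝ) • outer (A13Ket i) := by
  fin_cases i <;> rfl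

theorem linearIndependent_A13Ket_pair {i j : Fin 3} (hij : i ≠ j) :
    LinearIndependent ℂ ![A13Ket i, A13Ket j] := by
  apply linearIndependent_pair_of_det_ne_zero
  fin_cases i <;> fin_cases j <;> simp [A13Ket, ketZero, ketPhiPlus, ketPhiMinus] at hij ⊢
  all_goals ring_nf; simp

theorem sq_sqrt_three : (Real.sqrt 3 : ℂ) ^ 2 = 3 := by
  exact_mod_cast Real.sq_sqrt (by norm_num : (0 : ℝ) ≤ 3)

theorem outer_ketZero : outer ketZero = !![1, 0; 0, 0] := by
  ext i j; fin_cases i <;> fin_cases j <;> simp [outer, ketZero, vecMulVec_apply]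

theorem outer_ketPhiPlus :
    outer ketPhiPlus = !![1 / 4, (Real.sqrt 3 : ℂ) / 4; (Real.sqrt 3 : ℂ) / 4, 3 / 4] := by
  ext i j; fin_cases i <;> fin_cases j <;> simp [outer, ketPhiPlus, vecMulVec_apply]
  all_goals first | ring1 | linear_combination sq_sqrt_three / 4

theorem outer_ketPhiMinus :
    outer ketPhiMinus = !![1 / 4, -((Real.sqrt 3 : ℂ) / 4); -((Real.sqrt 3 : ℂ) / 4), 3 / 4] := by
  ext i j; fin_cases i <;> fin_cases j <;> simp [outer, ketPhiMinus, vecMulVec_apply]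
  all_goals first | ring1 | linear_combination sq_sqrt_three / 4

theorem sum_A13 : ∑ i, A13 i = 1 := by
  simp only [Fin.sum_univ_three, A13, cons_val_zero, cons_val_one, cons_val_two, outer_ketZero,
    outer_ketPhiPlus, outer_ketPhiMinus]
  ext i j; fin_cases i <;> fin_cases j <;> norm_num

theorem qubit_intersubjective_povm_not_pvm :
    (∀ i, (A13 i).PosSemidef) ∧ (∑ i, A13 i = 1) ∧
      (∀ i j, i ≠ j →
        LinearMap.range (A13 i).mulVecLin ⊓ LinearMap.range (A13 j).mulVecLin = ⊥) ∧
      A13 0 * A13 0 ≠ A13 0 := by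
  refine ⟨fun i => ?_, sum_A13, fun i j hij => ?_, ?_⟩
  · rw [A13_eq_smul_outer]
    exact (posSemidef_vecMulVec_self_star _).smul (by norm_num)
  · rw [A13_eq_smul_outer, A13_eq_smul_outer]
    exact eq_bot_mono (inf_le_inf (range_mulVecLin_smul_vecMulVec_le _ _ _)
      (range_mulVecLin_smul_vecMulVec_le _ _ _))
      (linearIndependent_A13Ket_pair hij).span_singleton_inf_span_singleton_eq_bot
  · have hP : IsIdempotentElem (outer ketZero) :=
      isIdempotentElem_vecMulVec_self_star (by simp [ketZero, dotProduct])
    have hP0 : outer ketZero ≠ 0 := by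
      rw [outer_ketZero]
      exact fun h => one_ne_zero congr($h 0 0)
    change ¬IsIdempotentElem ((2 / 3 : ℝ) • outer ketZero)
    rw [isIdempotentElem_smul_iff hP hP0, IsIdempotentElem]
    norm_num
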